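/- arXiv:2309.08875 — 13 statements merged into one kernel-verified Lean document; each statement's English description precedes it below -/
import Mathlib

section
/- Let C = (a, g) and C' = (a', g') be contracts over a Boolean algebra B, and define C' → C = ((a ⊓ ¬a') ⊔ (g' ⊓ ¬g), g ⊔ ¬g'). Then C' → C is a contract, and for every contract C'' one has C'' ∧ C' ≤ C if and only if C'' ≤ (C' → C); in particular C' → C is the largest contract C'' satisfying C'' ∧ C' ≤ C. -/
/-! For `C'' = (a'', g'')`, `C'' ∧ C' ≤ C` says `g'' ⊓ g' ≤ g` and `a ≤ a'' ⊔ a'`, that is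
`g'' ≤ g' ⇨ g` and `a \ a' ≤ a''`. The only extra demand of `C'' ≤ (C' → C)` is `g' \ g ≤ a''`,
which holds because `g' \ g` is disjoint from `g''` and `a'' ⊔ g'' = ⊤`. The implication is a
contract since its assumption contains `g' \ g`, the complement of its guarantee `g' ⇨ g`. -/

variable {B : Type*} [BooleanAlgebra B]

/-- A contract over a Boolean algebra is a pair `(a, g)` with `a ⊔ g = ⊤`. -/
def IsContract (C : B × B) : Prop := C.1 ⊔ C.2 = ⊤

/-- Refinement order: `(a, g) ≤ (a', g')` iff `g ≤ g'` and `a' ≤ a`. -/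
def cLe (C C' : B × B) : Prop := C.2 ≤ C'.2 ∧ C'.1 ≤ C.1

/-- Conjunction of contracts. -/
def cAnd (C C' : B × B) : B × B := (C.1 ⊔ C'.1, C.2 ⊓ C'.2)

/-- Disjunction of contracts. -/
def cOr (C C' : B × B) : B × B := (C.1 ⊓ C'.1, C.2 ⊔ C'.2)

/-- Composition of contracts. -/
def cComp (C C' : B × B) : B × B := ((C.1 ⊓ C'.1) ⊔ (C.2 ⊓ C'.2)ᶜ, C.2 ⊓ C'.2)

/-- Merging of contracts. -/
def cMerge (C C' : B × B) : B × B := (C.1 ⊓ C'.1, (C.2 ⊓ C'.2) ⊔ (C.1 ⊓ C'.1)ᶜ)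

/-- Reciprocal of a contract. -/
def cRecip (C : B × B) : B × B := (C.2, C.1)

/-- Quotient of contracts. -/
def cQuot (C C' : B × B) : B × B := (C.1 ⊓ C'.2, (C.2 ⊓ C'.1) ⊔ (C.1 ⊓ C'.2)ᶜ)

/-- Separation of contracts. -/
def cSep (C C' : B × B) : B × B := ((C.1 ⊓ C'.2) ⊔ (C.2 ⊓ C'.1)ᶜ, C.2 ⊓ C'.1)

/-- Implication of contracts: `cImp C' C` is `C' → C`. -/
def cImp (C' C : B × B) : B × B := ((C.1 ⊓ (C'.1)ᶜ) ⊔ (C'.2 ⊓ (C.2)ᶜ), C.2 ⊔ (C'.2)ᶜ)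

/-- Coimplication of contracts: `cCoimp C' C` is `C' ↛ C`. -/
def cCoimp (C' C : B × B) : B × B := (C.1 ⊔ (C'.1)ᶜ, (C.2 ⊓ (C'.2)ᶜ) ⊔ (C'.1 ⊓ (C.1)ᶜ))

/-- The bottom contract `0 = (⊤, ⊥)`. -/
def cZero : B × B := (⊤, ⊥)

/-- The top contract `1 = (⊥, ⊤)`. -/
def cOne : B × B := (⊥, ⊤)

/-- The identity contract `e = (⊤, ⊤)`. -/
def cE : B × B := (⊤, ⊤)

/-- Left action of `b : B` on contracts: `b · (a, g) = (b ⊓ a, ¬b ⊔ g)`. -/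
def lAct (b : B) (C : B × B) : B × B := (b ⊓ C.1, bᶜ ⊔ C.2)

/-- Right action of `b : B` on contracts: `(a, g) · b = (¬b ⊔ a, b ⊓ g)`. -/
def rAct (C : B × B) (b : B) : B × B := (bᶜ ⊔ C.1, b ⊓ C.2)

theorem isContract_cImp (C' C : B × B) : IsContract (cImp C' C) := by
  rw [IsContract, cImp, eq_top_iff]
  calc ⊤ = C'.2 \ C.2 ⊔ (C'.2 ⇨ C.2) := by rw [← compl_himp, compl_sup_eq_top]
    _ ≤ _ := by rw [sdiff_eq, himp_eq]; exact sup_le_sup_right le_sup_right _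

theorem le_sup_of_inf_le_of_sup_eq_top {x y u v : B} (hxy : x ⊔ y = ⊤) (h : y ⊓ u ≤ v) :
    u ≤ x ⊔ v :=
  calc u = (x ⊔ y) ⊓ u := by rw [hxy, top_inf_eq]
    _ = x ⊓ u ⊔ y ⊓ u := inf_sup_right _ _ _
    _ ≤ x ⊔ v := sup_le_sup inf_le_left h

theorem cLe_cAnd_iff_cLe_cImp {C'' : B × B} (hC'' : IsContract C'') (C' C : B × B) :
    cLe (cAnd C'' C') C ↔ cLe C'' (cImp C' C) := by
  simp only [cLe, cAnd, cImp, sup_le_iff, ← himp_eq, le_himp_iff, ← sdiff_eq, sdiff_le_iff']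
  exact ⟨fun ⟨hg, ha⟩ => ⟨hg, ha, le_sup_of_inf_le_of_sup_eq_top hC'' hg⟩,
    fun ⟨hg, ha, _⟩ => ⟨hg, ha⟩⟩

theorem implication_is_right_adjoint_of_conjunction_general
    (a g a' g' : B) :
    IsContract (cImp (a', g') (a, g)) ∧
    ∀ C'' : B × B, IsContract C'' →
      (cLe (cAnd C'' (a', g')) (a, g) ↔ cLe C'' (cImp (a', g') (a, g))) :=
  ⟨isContract_cImp _ _, fun _ hC'' => cLe_cAnd_iff_cLe_cImp hC'' _ _⟩

theorem implication_is_right_adjoint_of_conjunction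
    (a g a' g' : B) (h : a ⊔ g = ⊤) (h' : a' ⊔ g' = ⊤) :
    IsContract (cImp (a', g') (a, g)) ∧
    ∀ C'' : B × B, IsContract C'' →
      (cLe (cAnd C'' (a', g')) (a, g) ↔ cLe C'' (cImp (a', g') (a, g))) :=
  implication_is_right_adjoint_of_conjunction_general a g a' g'
end

section
/- Let C = (a, g) and C' = (a', g') be contracts over a Boolean algebra B, and define C' ↛ C = (a ⊔ ¬a', (g ⊓ ¬g') ⊔ (a' ⊓ ¬a)). Then C' ↛ C is a contract, and for every contract C'' one has C ≤ C'' ∨ C' if and only if (C' ↛ C) ≤ C''; in particular C' ↛ C is the smallest contract C'' satisfying C ≤ C'' ∨ C'. -/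
variable {B : Type*} [BooleanAlgebra B]

theorem compl_cCoimp_fst (C' C : B × B) : (cCoimp C' C).1ᶜ = C'.1 ⊓ C.1ᶜ := by
  rw [cCoimp, compl_sup, compl_compl, inf_comm]

theorem isContract_cCoimp (C' C : B × B) : IsContract (cCoimp C' C) :=
  codisjoint_iff.mp <| codisjoint_iff_compl_le_right.mpr <|
    (compl_cCoimp_fst C' C).trans_le le_sup_right

theorem cLe_cOr_iff_cLe_cCoimp (C' C C'' : B × B) (hC'' : IsContract C'') :
    cLe C (cOr C'' C') ↔ cLe (cCoimp C' C) C'' := by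
  have hg : C.2 ⊓ C'.2ᶜ ≤ C''.2 ↔ C.2 ≤ C''.2 ⊔ C'.2 := by
    rw [← sdiff_eq, sdiff_le_iff, sup_comm]
  have ha : C''.1 ≤ C.1 ⊔ C'.1ᶜ ↔ C''.1 ⊓ C'.1 ≤ C.1 := by
    rw [← himp_eq, le_himp_iff]
  simp only [cLe, cOr, cCoimp, sup_le_iff, ← hg, ← ha]
  constructor
  · rintro ⟨hg, ha⟩
    -- The extra summand `C'.1 ⊓ C.1ᶜ` is absorbed because `C''.1ᶜ ≤ C''.2` for a contract.
    have hout : C'.1 ⊓ C.1ᶜ ≤ C''.1ᶜ := compl_cCoimp_fst C' C ▸ compl_le_compl ha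
    exact ⟨⟨hg, hout.trans (codisjoint_iff_compl_le_right.mp (codisjoint_iff.mpr hC''))⟩, ha⟩
  · exact fun ⟨⟨hg, _⟩, ha⟩ => ⟨hg, ha⟩

theorem coimplication_is_left_adjoint_of_disjunction_general
    (a g a' g' : B) :
    IsContract (cCoimp (a', g') (a, g)) ∧
    ∀ C'' : B × B, IsContract C'' →
      (cLe (a, g) (cOr C'' (a', g')) ↔ cLe (cCoimp (a', g') (a, g)) C'') :=
  ⟨isContract_cCoimp _ _, fun C'' hC'' => cLe_cOr_iff_cLe_cCoimp _ _ C'' hC''⟩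

theorem coimplication_is_left_adjoint_of_disjunction
    (a g a' g' : B) (h : a ⊔ g = ⊤) (h' : a' ⊔ g' = ⊤) :
    IsContract (cCoimp (a', g') (a, g)) ∧
    ∀ C'' : B × B, IsContract C'' →
      (cLe (a, g) (cOr C'' (a', g')) ↔ cLe (cCoimp (a', g') (a, g)) C'') :=
  coimplication_is_left_adjoint_of_disjunction_general a g a' g'
end

section
/- For all contracts C = (a, g) and C' = (a', g') over a Boolean algebra B, implication and coimplication are dual under the reciprocal: C' → C = ((C')⁻¹ ↛ C⁻¹)⁻¹, where C' → C = ((a ⊓ ¬a') ⊔ (g' ⊓ ¬g), g ⊔ ¬g') and C' ↛ C = (a ⊔ ¬a', (g ⊓ ¬g') ⊔ (a' ⊓ ¬a)). -/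
variable {B : Type*} [BooleanAlgebra B]

theorem implication_coimplication_dual_general
    (C C' : B × B) :
    cImp C' C = cRecip (cCoimp (cRecip C') (cRecip C)) :=
  rfl

theorem implication_coimplication_dual
    (C C' : B × B) (hC : IsContract C) (hC' : IsContract C') :
    cImp C' C = cRecip (cCoimp (cRecip C') (cRecip C)) :=
  implication_coimplication_dual_general C C'
end

section
/- Composition of contracts over a Boolean algebra B is monotonic with respect to the refinement order: if C₁ ≤ C₁' and C₂ ≤ C₂' then C₁ ∥ C₂ ≤ C₁' ∥ C₂'. -/
variable {B : Type*} [BooleanAlgebra B]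

theorem composition_monotone_general
    (C₁ C₁' C₂ C₂' : B × B)
    (hle₁ : cLe C₁ C₁') (hle₂ : cLe C₂ C₂') :
    cLe (cComp C₁ C₂) (cComp C₁' C₂') := by
  obtain ⟨hg₁, ha₁⟩ := hle₁
  obtain ⟨hg₂, ha₂⟩ := hle₂
  have hg : C₁.2 ⊓ C₂.2 ≤ C₁'.2 ⊓ C₂'.2 := inf_le_inf hg₁ hg₂
  exact ⟨hg, sup_le_sup (inf_le_inf ha₁ ha₂) (compl_le_compl hg)⟩

theorem composition_monotone
    (C₁ C₁' C₂ C₂' : B × B)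
    (h₁ : IsContract C₁) (h₁' : IsContract C₁')
    (h₂ : IsContract C₂) (h₂' : IsContract C₂')
    (hle₁ : cLe C₁ C₁') (hle₂ : cLe C₂ C₂') :
    cLe (cComp C₁ C₂) (cComp C₁' C₂') :=
  composition_monotone_general C₁ C₁' C₂ C₂' hle₁ hle₂
end

section
/- Let C = (a, g) and C' = (a', g') be contracts over a Boolean algebra B, and define the quotient C / C' = (a ⊓ g', (g ⊓ a') ⊔ ¬(a ⊓ g')). Then C / C' is a contract, and for every contract C'' one has C' ∥ C'' ≤ C if and only if C'' ≤ C / C'; in particular C / C' is the largest contract C'' satisfying C' ∥ C'' ≤ C. -/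
variable {B : Type*} [BooleanAlgebra B]

/-!
Via `x ≤ y ⊔ zᶜ ↔ x ⊓ z ≤ y`, both `C' ∥ C'' ≤ C` and `C'' ≤ C / C'` unfold to inequalities
bounding the meet `a ⊓ g' ⊓ g''`. They differ only in whether the conjunct `a` (resp. `g''`)
appears on the left, and the contract conditions `a ⊔ g = ⊤`, `a'' ⊔ g'' = ⊤` allow dropping it.
-/

theorem isContract_cQuot (C C' : B × B) : IsContract (cQuot C C') := by
  rw [IsContract, cQuot, sup_left_comm, sup_compl_eq_top, sup_top_eq]

theorem cLe_cQuot_iff {C C' D : B × B} :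
    cLe D (cQuot C C') ↔ C.1 ⊓ C'.2 ⊓ D.2 ≤ C.2 ⊓ C'.1 ∧ C.1 ⊓ C'.2 ≤ D.1 := by
  rw [cLe, cQuot, ← himp_eq, le_himp_iff']

theorem cComp_cLe_iff {C C' D : B × B} :
    cLe (cComp C' D) C ↔ C'.2 ⊓ D.2 ≤ C.2 ∧ C.1 ⊓ C'.2 ⊓ D.2 ≤ C'.1 ⊓ D.1 := by
  rw [cLe, cComp, ← himp_eq, le_himp_iff, ← inf_assoc]

theorem cComp_cLe_iff_cLe_cQuot {C C' D : B × B} (hC : IsContract C) (hD : IsContract D) :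
    cLe (cComp C' D) C ↔ cLe D (cQuot C C') := by
  obtain ⟨a, g⟩ := C
  obtain ⟨a', g'⟩ := C'
  obtain ⟨a'', g''⟩ := D
  have hC : Codisjoint a g := codisjoint_iff.mpr hC
  have hD : Codisjoint g'' a'' := (codisjoint_iff.mpr hD).symm
  rw [cComp_cLe_iff, cLe_cQuot_iff]
  dsimp only
  constructor
  · rintro ⟨hg, ha⟩
    obtain ⟨ha', ha''⟩ := le_inf_iff.mp ha
    exact ⟨le_inf ((inf_le_inf_right g'' inf_le_right).trans hg) ha',
      hD.left_le_of_le_inf_right ha''⟩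
  · rintro ⟨hga, ha''⟩
    obtain ⟨hg, ha'⟩ := le_inf_iff.mp hga
    exact ⟨hC.left_le_of_le_inf_left ((inf_assoc a g' g'').ge.trans hg),
      le_inf ha' (inf_le_left.trans ha'')⟩

theorem quotient_is_right_adjoint_of_composition_general
    (a g a' g' : B) (h : a ⊔ g = ⊤) :
    IsContract (cQuot (a, g) (a', g')) ∧
    ∀ C'' : B × B, IsContract C'' →
      (cLe (cComp (a', g') C'') (a, g) ↔ cLe C'' (cQuot (a, g) (a', g'))) :=
  ⟨isContract_cQuot _ _, fun _ hD => cComp_cLe_iff_cLe_cQuot h hD⟩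

theorem quotient_is_right_adjoint_of_composition
    (a g a' g' : B) (h : a ⊔ g = ⊤) (h' : a' ⊔ g' = ⊤) :
    IsContract (cQuot (a, g) (a', g')) ∧
    ∀ C'' : B × B, IsContract C'' →
      (cLe (cComp (a', g') C'') (a, g) ↔ cLe C'' (cQuot (a, g) (a', g'))) :=
  quotient_is_right_adjoint_of_composition_general a g a' g' h
end

section
/- Let C = (a, g) and C' = (a', g') be contracts over a Boolean algebra B, and define the separation C ÷ C' = ((a ⊓ g') ⊔ ¬(g ⊓ a'), g ⊓ a'). Then C ÷ C' is a contract, and for every contract C'' one has C ≤ C' • C'' if and only if (C ÷ C') ≤ C''; in particular C ÷ C' is the smallest contract C'' satisfying C ≤ C' • C''. -/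
variable {B : Type*} [BooleanAlgebra B]

/-! Writing `m = g ⊓ a' ⊓ a''`, both sides of the adjunction say `m ≤ a ⊓ g' ⊓ g''`: an inequality
`x ≤ y ⊔ zᶜ` is `x ⊓ z ≤ y`, and the contract conditions `gᶜ ≤ a`, `a''ᶜ ≤ g''` let one shrink the
left side of `a' ⊓ a'' ≤ a` and of `g ⊓ a' ≤ g''` to `m`. -/

theorem le_iff_inf_le_of_compl_le {x y z : B} (hz : zᶜ ≤ y) : x ≤ y ↔ x ⊓ z ≤ y := by
  rw [← le_himp_iff, himp_eq, sup_eq_left.2 hz]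

theorem le_sup_compl_iff {x y z : B} : x ≤ y ⊔ zᶜ ↔ x ⊓ z ≤ y := by
  rw [← himp_eq, le_himp_iff]

theorem isContract_cSep (C C' : B × B) : IsContract (cSep C C') := by
  rw [IsContract, cSep, sup_assoc, compl_sup_eq_top, sup_top_eq]

theorem cLe_cMerge_iff {a g : B} (h : IsContract (a, g)) (a' g' a'' g'' : B) :
    cLe (a, g) (cMerge (a', g') (a'', g'')) ↔ g ⊓ a' ⊓ a'' ≤ a ⊓ g' ⊓ g'' := by
  have hg : gᶜ ≤ a := codisjoint_iff_compl_le_left.1 (codisjoint_iff.2 h)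
  rw [cLe, cMerge, le_sup_compl_iff, le_iff_inf_le_of_compl_le hg]
  simp only [le_inf_iff, inf_comm, inf_left_comm]
  tauto

theorem cLe_cSep_iff (a g a' g' : B) {a'' g'' : B} (h'' : IsContract (a'', g'')) :
    cLe (cSep (a, g) (a', g')) (a'', g'') ↔ g ⊓ a' ⊓ a'' ≤ a ⊓ g' ⊓ g'' := by
  have ha : a''ᶜ ≤ g'' := codisjoint_iff_compl_le_right.1 (codisjoint_iff.2 h'')
  rw [cLe, cSep, le_sup_compl_iff, le_iff_inf_le_of_compl_le ha]
  simp only [le_inf_iff, inf_comm, inf_left_comm]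
  tauto

theorem separation_is_left_adjoint_of_merging_general
    (a g a' g' : B) (h : a ⊔ g = ⊤) :
    IsContract (cSep (a, g) (a', g')) ∧
    ∀ C'' : B × B, IsContract C'' →
      (cLe (a, g) (cMerge (a', g') C'') ↔ cLe (cSep (a, g) (a', g')) C'') := by
  refine ⟨isContract_cSep _ _, fun ⟨a'', g''⟩ h'' => ?_⟩
  rw [cLe_cMerge_iff h, cLe_cSep_iff _ _ _ _ h'']

theorem separation_is_left_adjoint_of_merging
    (a g a' g' : B) (h : a ⊔ g = ⊤) (h' : a' ⊔ g' = ⊤) :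
    IsContract (cSep (a, g) (a', g')) ∧
    ∀ C'' : B × B, IsContract C'' →
      (cLe (a, g) (cMerge (a', g') C'') ↔ cLe (cSep (a, g) (a', g')) C'') :=
  separation_is_left_adjoint_of_merging_general a g a' g' h
end

section
/- The set of contracts over a Boolean algebra B equipped with composition ∥ is an idempotent commutative monoid with identity e = (⊤, ⊤), and equipped with merging • it is an idempotent commutative monoid with identity e = (⊤, ⊤): both operations are associative, commutative, idempotent, and satisfy C ∥ e = C and C • e = C for every contract C. -/
variable {B : Type*} [BooleanAlgebra B]

/-!
Composition is the componentwise meet followed by the saturation `(a, g) ↦ (a ⊔ gᶜ, g)`.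
Saturation fixes exactly the contracts and may be applied or omitted inside a meet before an
outer saturation, so composition inherits associativity, commutativity and idempotence from `⊓`,
with unit `(⊤, ⊤) = ⊤`. Merging is composition conjugated by swapping the two components.
-/

theorem inf_sup_sup_eq_of_le {α : Type*} [DistribLattice α] (a x : α) {c d : α} (h : c ≤ d) :
    a ⊓ (x ⊔ c) ⊔ d = a ⊓ x ⊔ d := by
  rw [inf_sup_left, sup_assoc, sup_eq_right.mpr (inf_le_right.trans h)]

def saturate (C : B × B) : B × B := (C.1 ⊔ C.2ᶜ, C.2)

theorem cComp_eq_saturate_inf (C C' : B × B) : cComp C C' = saturate (C ⊓ C') := rfl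

theorem isContract_saturate (C : B × B) : IsContract (saturate C) := by
  rw [IsContract, saturate, sup_assoc, compl_sup_eq_top, sup_top_eq]

theorem saturate_eq_self {C : B × B} (h : IsContract C) : saturate C = C := by
  ext
  · exact sup_eq_left.mpr (codisjoint_iff_compl_le_left.mp (codisjoint_iff.mpr h))
  · rfl

theorem saturate_inf_saturate (C D : B × B) : saturate (C ⊓ saturate D) = saturate (C ⊓ D) := by
  ext
  · exact inf_sup_sup_eq_of_le C.1 D.1 (compl_le_compl inf_le_right)
  · rfl

theorem isContract_cComp (C C' : B × B) : IsContract (cComp C C') :=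
  isContract_saturate (C ⊓ C')

theorem cComp_comm (C C' : B × B) : cComp C C' = cComp C' C := by
  simp only [cComp_eq_saturate_inf, inf_comm]

theorem cComp_assoc (C C' C'' : B × B) : cComp (cComp C C') C'' = cComp C (cComp C' C'') := by
  simp only [cComp_eq_saturate_inf]
  rw [saturate_inf_saturate, inf_comm, saturate_inf_saturate, inf_comm, inf_assoc]

theorem cComp_self {C : B × B} (h : IsContract C) : cComp C C = C := by
  rw [cComp_eq_saturate_inf, inf_idem, saturate_eq_self h]

theorem cComp_cE {C : B × B} (h : IsContract C) : cComp C cE = C := by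
  rw [cComp_eq_saturate_inf, show (cE : B × B) = ⊤ from rfl, inf_top_eq, saturate_eq_self h]

theorem cMerge_eq_swap_cComp (C C' : B × B) : cMerge C C' = (cComp C.swap C'.swap).swap := rfl

theorem IsContract.swap {C : B × B} (h : IsContract C) : IsContract C.swap := by
  rwa [IsContract, Prod.fst_swap, Prod.snd_swap, sup_comm]

theorem isContract_cMerge (C C' : B × B) : IsContract (cMerge C C') :=
  (isContract_cComp C.swap C'.swap).swap

theorem cMerge_comm (C C' : B × B) : cMerge C C' = cMerge C' C := by
  rw [cMerge_eq_swap_cComp, cComp_comm, cMerge_eq_swap_cComp]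

theorem cMerge_assoc (C C' C'' : B × B) :
    cMerge (cMerge C C') C'' = cMerge C (cMerge C' C'') := by
  simp only [cMerge_eq_swap_cComp, Prod.swap_swap, cComp_assoc]

theorem cMerge_self {C : B × B} (h : IsContract C) : cMerge C C = C := by
  rw [cMerge_eq_swap_cComp, cComp_self h.swap, Prod.swap_swap]

theorem cMerge_cE {C : B × B} (h : IsContract C) : cMerge C cE = C := by
  rw [cMerge_eq_swap_cComp, show (cE : B × B).swap = cE from rfl, cComp_cE h.swap, Prod.swap_swap]

theorem composition_and_merging_idempotent_commutative_monoids :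
    (∀ C C' : B × B, IsContract C → IsContract C' → IsContract (cComp C C')) ∧
    (∀ C C' C'' : B × B, IsContract C → IsContract C' → IsContract C'' →
      cComp C (cComp C' C'') = cComp (cComp C C') C'') ∧
    (∀ C C' : B × B, IsContract C → IsContract C' → cComp C C' = cComp C' C) ∧
    (∀ C : B × B, IsContract C → cComp C C = C) ∧
    (∀ C : B × B, IsContract C → cComp C (cE (B := B)) = C) ∧
    (∀ C C' : B × B, IsContract C → IsContract C' → IsContract (cMerge C C')) ∧
    (∀ C C' C'' : B × B, IsContract C → IsContract C' → IsContract C'' →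
      cMerge C (cMerge C' C'') = cMerge (cMerge C C') C'') ∧
    (∀ C C' : B × B, IsContract C → IsContract C' → cMerge C C' = cMerge C' C) ∧
    (∀ C : B × B, IsContract C → cMerge C C = C) ∧
    (∀ C : B × B, IsContract C → cMerge C (cE (B := B)) = C) :=
  ⟨fun C C' _ _ => isContract_cComp C C',
    fun C C' C'' _ _ _ => (cComp_assoc C C' C'').symm,
    fun C C' _ _ => cComp_comm C C',
    fun _ => cComp_self,
    fun _ => cComp_cE,
    fun C C' _ _ => isContract_cMerge C C',
    fun C C' C'' _ _ _ => (cMerge_assoc C C' C'').symm,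
    fun C C' _ _ => cMerge_comm C C',
    fun _ => cMerge_self,
    fun _ => cMerge_cE⟩
end

section
/- Define θ_g(a, g) = (¬(a ⊓ g), g) and θ_a(a, g) = (a, ¬(a ⊓ g)) on contracts over a Boolean algebra B. Then θ_g and θ_a map contracts to contracts and are involutions; θ_g is a monoid isomorphism between the composition monoid and the conjunction monoid, i.e., θ_g(C ∥ C') = θ_g(C) ∧ θ_g(C'), θ_g(C ∧ C') = θ_g(C) ∥ θ_g(C'), θ_g(e) = 1, and θ_g(1) = e; θ_a is a monoid isomorphism between the merging monoid and the disjunction monoid, i.e., θ_a(C • C') = θ_a(C) ∨ θ_a(C'), θ_a(C ∨ C') = θ_a(C) • θ_a(C'), θ_a(e) = 0, and θ_a(0) = e; moreover θ_a(C) = (θ_g(C⁻¹))⁻¹ for every contract C. -/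
/-! The statements about `θ_g` are identities of Boolean algebra (De Morgan and distributivity);
only involutivity uses the contract condition, in the form `¬g ≤ a`. Since `θ_a` is `θ_g`
conjugated by the reciprocal, and the reciprocal exchanges `∥` with `•`, `∧` with `∨`, and `1`
with `0` while fixing `e`, every statement about `θ_a` is the reciprocal of one about `θ_g`. -/

variable {B : Type*} [BooleanAlgebra B]

/-- `θ_g (a, g) = (¬(a ⊓ g), g)`. -/
def thetaG (C : B × B) : B × B := ((C.1 ⊓ C.2)ᶜ, C.2)

/-- `θ_a (a, g) = (a, ¬(a ⊓ g))`. -/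
def thetaA (C : B × B) : B × B := (C.1, (C.1 ⊓ C.2)ᶜ)

lemma IsContract.compl_snd_le_fst {C : B × B} (hC : IsContract C) : C.2ᶜ ≤ C.1 :=
  codisjoint_iff_compl_le_left.1 (codisjoint_iff.2 hC)

lemma isContract_cRecip {C : B × B} (hC : IsContract C) : IsContract (cRecip C) := by
  rw [IsContract, cRecip, sup_comm]; exact hC

lemma cRecip_cRecip {α : Type*} (C : α × α) : cRecip (cRecip C) = C := rfl

lemma cRecip_cMerge (C C' : B × B) :
    cRecip (cMerge C C') = cComp (cRecip C) (cRecip C') := rfl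

lemma cRecip_cOr (C C' : B × B) : cRecip (cOr C C') = cAnd (cRecip C) (cRecip C') := rfl

lemma cRecip_cAnd (C C' : B × B) : cRecip (cAnd C C') = cOr (cRecip C) (cRecip C') := rfl

lemma cRecip_cComp (C C' : B × B) :
    cRecip (cComp C C') = cMerge (cRecip C) (cRecip C') := rfl

lemma thetaA_eq_cRecip_thetaG_cRecip (C : B × B) : thetaA C = cRecip (thetaG (cRecip C)) := by
  simp [thetaA, thetaG, cRecip, inf_comm]

lemma isContract_thetaG (C : B × B) : IsContract (thetaG C) := by
  simp [IsContract, thetaG, sup_assoc]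

lemma thetaG_thetaG {C : B × B} (hC : IsContract C) : thetaG (thetaG C) = C := by
  ext
  · simp [thetaG, compl_inf, inf_sup_right, hC.compl_snd_le_fst]
  · rfl

lemma thetaG_cComp (C C' : B × B) : thetaG (cComp C C') = cAnd (thetaG C) (thetaG C') := by
  ext
  · simp only [thetaG, cComp, cAnd]
    rw [inf_sup_right, compl_inf_self, sup_bot_eq, inf_inf_inf_comm, compl_inf]
  · rfl

lemma thetaG_cAnd (C C' : B × B) : thetaG (cAnd C C') = cComp (thetaG C) (thetaG C') := by
  ext
  · simp only [thetaG, cComp, cAnd, compl_inf, compl_sup]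
    rw [sup_inf_right, sup_inf_right]
    congr 1 <;> simp [sup_assoc, sup_left_comm]
  · rfl

lemma thetaG_cE : thetaG (cE (B := B)) = cOne := by simp [thetaG, cE, cOne]

lemma thetaG_cOne : thetaG (cOne (B := B)) = cE := by simp [thetaG, cOne, cE]

lemma isContract_thetaA (C : B × B) : IsContract (thetaA C) := by
  rw [thetaA_eq_cRecip_thetaG_cRecip]
  exact isContract_cRecip (isContract_thetaG _)

lemma thetaA_thetaA {C : B × B} (hC : IsContract C) : thetaA (thetaA C) = C := by
  simp only [thetaA_eq_cRecip_thetaG_cRecip, cRecip_cRecip, thetaG_thetaG (isContract_cRecip hC)]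

lemma thetaA_cMerge (C C' : B × B) : thetaA (cMerge C C') = cOr (thetaA C) (thetaA C') := by
  simp only [thetaA_eq_cRecip_thetaG_cRecip, cRecip_cMerge, thetaG_cComp, cRecip_cAnd]

lemma thetaA_cOr (C C' : B × B) : thetaA (cOr C C') = cMerge (thetaA C) (thetaA C') := by
  simp only [thetaA_eq_cRecip_thetaG_cRecip, cRecip_cOr, thetaG_cAnd, cRecip_cComp]

lemma thetaA_cE : thetaA (cE (B := B)) = cZero := by
  rw [thetaA_eq_cRecip_thetaG_cRecip]; exact congrArg cRecip thetaG_cE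

lemma thetaA_cZero : thetaA (cZero (B := B)) = cE := by
  rw [thetaA_eq_cRecip_thetaG_cRecip]; exact congrArg cRecip thetaG_cOne

theorem thetaG_thetaA_monoid_isomorphisms :
    (∀ C : B × B, IsContract C → IsContract (thetaG C)) ∧
    (∀ C : B × B, IsContract C → IsContract (thetaA C)) ∧
    (∀ C : B × B, IsContract C → thetaG (thetaG C) = C) ∧
    (∀ C : B × B, IsContract C → thetaA (thetaA C) = C) ∧
    (∀ C C' : B × B, IsContract C → IsContract C' →
      thetaG (cComp C C') = cAnd (thetaG C) (thetaG C')) ∧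
    (∀ C C' : B × B, IsContract C → IsContract C' →
      thetaG (cAnd C C') = cComp (thetaG C) (thetaG C')) ∧
    thetaG (cE (B := B)) = cOne ∧
    thetaG (cOne (B := B)) = cE ∧
    (∀ C C' : B × B, IsContract C → IsContract C' →
      thetaA (cMerge C C') = cOr (thetaA C) (thetaA C')) ∧
    (∀ C C' : B × B, IsContract C → IsContract C' →
      thetaA (cOr C C') = cMerge (thetaA C) (thetaA C')) ∧
    thetaA (cE (B := B)) = cZero ∧
    thetaA (cZero (B := B)) = cE ∧
    (∀ C : B × B, IsContract C → thetaA C = cRecip (thetaG (cRecip C))) := by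
  refine ⟨fun C _ => isContract_thetaG C, fun C _ => isContract_thetaA C,
    fun _ hC => thetaG_thetaG hC, fun _ hC => thetaA_thetaA hC,
    fun C C' _ _ => thetaG_cComp C C', fun C C' _ _ => thetaG_cAnd C C', thetaG_cE, thetaG_cOne,
    fun C C' _ _ => thetaA_cMerge C C', fun C C' _ _ => thetaA_cOr C C', thetaA_cE, thetaA_cZero,
    fun C _ => thetaA_eq_cRecip_thetaG_cRecip C⟩
end

section
/- Merging of contracts over a Boolean algebra B distributes over both conjunction and disjunction: for all contracts C, C', C'', C • (C' ∧ C'') = (C • C') ∧ (C • C'') and C • (C' ∨ C'') = (C • C') ∨ (C • C''). -/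
variable {B : Type*} [BooleanAlgebra B]

/-! For disjunction the identity holds for arbitrary pairs, by distributivity and De Morgan. For conjunction,
once the common `¬a` is split off, the guarantee expands into `g ⊓ g' ⊓ g''`, `¬a' ⊓ ¬a''` and
the cross terms `g ⊓ g' ⊓ ¬a''`, `¬a' ⊓ g ⊓ g''`; the contract conditions `¬a' ≤ g'` and
`¬a'' ≤ g''` make the cross terms redundant. -/

theorem inf_sup_inf_sup_eq_of_le {α : Type*} [DistribLattice α] {c p q u v : α}
    (hu : u ≤ p) (hv : v ≤ q) :
    (c ⊓ p ⊔ u) ⊓ (c ⊓ q ⊔ v) = c ⊓ (p ⊓ q) ⊔ u ⊓ v := by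
  refine le_antisymm ?_ (sup_le ?_ (inf_le_inf le_sup_right le_sup_right))
  · simp only [inf_sup_left, inf_sup_right]
    refine sup_le (sup_le ?_ ?_) (sup_le ?_ le_sup_right) <;> apply le_sup_of_le_left
    · exact (inf_inf_distrib_left c p q).ge
    · exact (inf_left_comm u c q).trans_le (inf_le_inf_left c (inf_le_inf_right q hu))
    · exact (inf_assoc c p v).trans_le (inf_le_inf_left c (inf_le_inf_left p hv))
  · exact le_inf (le_sup_of_le_left (inf_le_inf_left c inf_le_left))
      (le_sup_of_le_left (inf_le_inf_left c inf_le_right))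

theorem compl_le_of_isContract {C : B × B} (h : IsContract C) : C.1ᶜ ≤ C.2 :=
  codisjoint_iff_compl_le_right.1 (codisjoint_iff.2 h)

theorem cMerge_cOr (C C' C'' : B × B) :
    cMerge C (cOr C' C'') = cOr (cMerge C C') (cMerge C C'') := by
  simp only [cMerge, cOr]
  rw [inf_inf_distrib_left, inf_sup_left, compl_inf, sup_sup_sup_comm]

theorem cMerge_cAnd (C : B × B) {C' C'' : B × B} (hC' : IsContract C') (hC'' : IsContract C'') :
    cMerge C (cAnd C' C'') = cAnd (cMerge C C') (cMerge C C'') := by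
  obtain ⟨a, g⟩ := C
  obtain ⟨a', g'⟩ := C'
  obtain ⟨a'', g''⟩ := C''
  have h' : a'ᶜ ≤ g' := compl_le_of_isContract hC'
  have h'' : a''ᶜ ≤ g'' := compl_le_of_isContract hC''
  refine Prod.ext (inf_sup_left _ _ _) ?_
  show g ⊓ (g' ⊓ g'') ⊔ (a ⊓ (a' ⊔ a''))ᶜ = (g ⊓ g' ⊔ (a ⊓ a')ᶜ) ⊓ (g ⊓ g'' ⊔ (a ⊓ a'')ᶜ)
  calc g ⊓ (g' ⊓ g'') ⊔ (a ⊓ (a' ⊔ a''))ᶜ = (g ⊓ (g' ⊓ g'') ⊔ a'ᶜ ⊓ a''ᶜ) ⊔ aᶜ := by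
        rw [compl_inf, compl_sup, sup_comm aᶜ, sup_assoc]
    _ = (g ⊓ g' ⊔ a'ᶜ) ⊓ (g ⊓ g'' ⊔ a''ᶜ) ⊔ aᶜ := by
        rw [inf_sup_inf_sup_eq_of_le h' h'']
    _ = (g ⊓ g' ⊔ (a ⊓ a')ᶜ) ⊓ (g ⊓ g'' ⊔ (a ⊓ a'')ᶜ) := by
        rw [sup_inf_right, compl_inf, compl_inf, sup_comm aᶜ, sup_comm aᶜ, sup_assoc, sup_assoc]

theorem merging_distributes_over_conjunction_and_disjunction_general
    (C C' C'' : B × B) (hC' : IsContract C') (hC'' : IsContract C'') :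
    cMerge C (cAnd C' C'') = cAnd (cMerge C C') (cMerge C C'') ∧
    cMerge C (cOr C' C'') = cOr (cMerge C C') (cMerge C C'') :=
  ⟨cMerge_cAnd C hC' hC'', cMerge_cOr C C' C''⟩

theorem merging_distributes_over_conjunction_and_disjunction
    (C C' C'' : B × B) (hC : IsContract C) (hC' : IsContract C') (hC'' : IsContract C'') :
    cMerge C (cAnd C' C'') = cAnd (cMerge C C') (cMerge C C'') ∧
    cMerge C (cOr C' C'') = cOr (cMerge C C') (cMerge C C'') :=
  merging_distributes_over_conjunction_and_disjunction_general C C' C'' hC' hC''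
end

section
/- Let B be a Boolean algebra in which ⊥ ≠ ⊤. Then, for contracts over B with distinguished elements 0 = (⊤, ⊥), 1 = (⊥, ⊤), e = (⊤, ⊤): e ∧ (1 • 0) ≠ (e ∧ 1) • (e ∧ 0); e ∨ (1 ∥ 0) ≠ (e ∨ 1) ∥ (e ∨ 0); 1 ∥ (0 • e) ≠ (1 ∥ 0) • (1 ∥ e); and 0 • (1 ∥ e) ≠ (0 • 1) ∥ (0 • e). Hence conjunction does not distribute over merging, disjunction does not distribute over composition, composition does not distribute over merging, and merging does not distribute over composition. -/
variable {B : Type*} [BooleanAlgebra B]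

/-! Every side of the four equations collapses to one of `0`, `1`, `e`: `0` and `1` are the bottom
and top of the refinement order, so `C ∧ 1 = C`, `C ∧ 0 = 0`, `C ∨ 0 = C`, `C ∨ 1 = 1`; `0` absorbs
composition and `1` absorbs merging; and `e` is a unit for both composition and merging on contracts,
because `a ⊔ g = ⊤` gives `gᶜ ≤ a` and `aᶜ ≤ g`. In each case the two sides land on different
elements of `{0, 1, e}`, and these are pairwise distinct once `⊥ ≠ ⊤`. -/

theorem isContract_zero : IsContract (cZero : B × B) := by
  simp [IsContract, cZero]

theorem isContract_one : IsContract (cOne : B × B) := by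
  simp [IsContract, cOne]

theorem IsContract.codisjoint {C : B × B} (hC : IsContract C) : Codisjoint C.1 C.2 :=
  codisjoint_iff.mpr hC

theorem cAnd_one_right (C : B × B) : cAnd C cOne = C := by
  simp [cAnd, cOne]

theorem cAnd_zero_right (C : B × B) : cAnd C cZero = cZero := by
  simp [cAnd, cZero]

theorem cOr_zero_right (C : B × B) : cOr C cZero = C := by
  simp [cOr, cZero]

theorem cOr_one_right (C : B × B) : cOr C cOne = cOne := by
  simp [cOr, cOne]

theorem cComp_zero_right (C : B × B) : cComp C cZero = cZero := by
  simp [cComp, cZero]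

theorem cComp_e_right {C : B × B} (hC : IsContract C) : cComp C cE = C := by
  have hg : C.2ᶜ ≤ C.1 := codisjoint_iff_compl_le_left.mp hC.codisjoint
  ext
  · simpa [cComp, cE] using hg
  · simp [cComp, cE]

theorem cMerge_one_left (C : B × B) : cMerge cOne C = cOne := by
  simp [cMerge, cOne]

theorem cMerge_one_right (C : B × B) : cMerge C cOne = cOne := by
  simp [cMerge, cOne]

theorem cMerge_e_left {C : B × B} (hC : IsContract C) : cMerge cE C = C := by
  have ha : C.1ᶜ ≤ C.2 := codisjoint_iff_compl_le_right.mp hC.codisjoint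
  ext
  · simp [cMerge, cE]
  · simpa [cMerge, cE] using ha

theorem cMerge_e_right {C : B × B} (hC : IsContract C) : cMerge C cE = C := by
  have ha : C.1ᶜ ≤ C.2 := codisjoint_iff_compl_le_right.mp hC.codisjoint
  ext
  · simp [cMerge, cE]
  · simpa [cMerge, cE] using ha

theorem cE_ne_cZero (h : (⊥ : B) ≠ ⊤) : (cE : B × B) ≠ cZero :=
  fun heq => h (congrArg Prod.snd heq).symm

theorem cE_ne_cOne (h : (⊥ : B) ≠ ⊤) : (cE : B × B) ≠ cOne :=
  fun heq => h (congrArg Prod.fst heq).symm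

theorem cZero_ne_cOne (h : (⊥ : B) ≠ ⊤) : (cZero : B × B) ≠ cOne :=
  fun heq => h (congrArg Prod.fst heq).symm

theorem distributivity_failures (h : (⊥ : B) ≠ ⊤) :
    cAnd (cE (B := B)) (cMerge cOne cZero) ≠ cMerge (cAnd cE cOne) (cAnd cE cZero) ∧
    cOr (cE (B := B)) (cComp cOne cZero) ≠ cComp (cOr cE cOne) (cOr cE cZero) ∧
    cComp (cOne (B := B)) (cMerge cZero cE) ≠ cMerge (cComp cOne cZero) (cComp cOne cE) ∧
    cMerge (cZero (B := B)) (cComp cOne cE) ≠ cComp (cMerge cZero cOne) (cMerge cZero cE) := by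
  simp only [cAnd_one_right, cAnd_zero_right, cOr_zero_right, cOr_one_right, cComp_zero_right,
    cComp_e_right isContract_one, cMerge_one_left, cMerge_one_right,
    cMerge_e_left isContract_zero, cMerge_e_right isContract_zero]
  exact ⟨cE_ne_cZero h, cE_ne_cOne h, cZero_ne_cOne h, (cZero_ne_cOne h).symm⟩
end

section
/- Let C₁, C₂, C₃, C₄ be contracts over a Boolean algebra B and let ⋆ denote any one of the four operations conjunction, disjunction, composition, or merging. Then the semi-distributive laws hold: (C₁ ∧ C₂) ⋆ (C₃ ∧ C₄) ≤ (C₁ ⋆ C₃) ∧ (C₂ ⋆ C₄) and (C₁ ∨ C₂) ⋆ (C₃ ∨ C₄) ≥ (C₁ ⋆ C₃) ∨ (C₂ ⋆ C₄). -/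
variable {B : Type*} [BooleanAlgebra B]

/-!
All four operations are monotone in both arguments for the refinement order, conjunction is the
meet and disjunction the join of that order. Semi-distributivity is then the usual consequence of
monotonicity: `C₁ ∧ C₂` refines both `C₁` and `C₂`, and `C₃ ∧ C₄` refines both `C₃` and `C₄`;
dually for disjunction.
-/

theorem cAnd_le_left (C C' : B × B) : cLe (cAnd C C') C := ⟨inf_le_left, le_sup_left⟩

theorem cAnd_le_right (C C' : B × B) : cLe (cAnd C C') C' := ⟨inf_le_right, le_sup_right⟩

theorem le_cAnd {D C C' : B × B} (h : cLe D C) (h' : cLe D C') : cLe D (cAnd C C') :=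
  ⟨le_inf h.1 h'.1, sup_le h.2 h'.2⟩

theorem le_cOr_left (C C' : B × B) : cLe C (cOr C C') := ⟨le_sup_left, inf_le_left⟩

theorem le_cOr_right (C C' : B × B) : cLe C' (cOr C C') := ⟨le_sup_right, inf_le_right⟩

theorem cOr_le {C C' D : B × B} (h : cLe C D) (h' : cLe C' D) : cLe (cOr C C') D :=
  ⟨sup_le h.1 h'.1, le_inf h.2 h'.2⟩

def CMonotone (star : B × B → B × B → B × B) : Prop :=
  ∀ ⦃C D C' D' : B × B⦄, cLe C D → cLe C' D' → cLe (star C C') (star D D')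

theorem cMonotone_cAnd : CMonotone (B := B) cAnd := fun _ _ _ _ h h' =>
  ⟨inf_le_inf h.1 h'.1, sup_le_sup h.2 h'.2⟩

theorem cMonotone_cOr : CMonotone (B := B) cOr := fun _ _ _ _ h h' =>
  ⟨sup_le_sup h.1 h'.1, inf_le_inf h.2 h'.2⟩

theorem cMonotone_cComp : CMonotone (B := B) cComp := fun _ _ _ _ h h' =>
  ⟨inf_le_inf h.1 h'.1,
    sup_le_sup (inf_le_inf h.2 h'.2) (compl_le_compl (inf_le_inf h.1 h'.1))⟩

theorem cMonotone_cMerge : CMonotone (B := B) cMerge := fun _ _ _ _ h h' =>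
  ⟨sup_le_sup (inf_le_inf h.1 h'.1) (compl_le_compl (inf_le_inf h.2 h'.2)),
    inf_le_inf h.2 h'.2⟩

theorem CMonotone.map_cAnd_le {star : B × B → B × B → B × B} (hstar : CMonotone star)
    (C₁ C₂ C₃ C₄ : B × B) :
    cLe (star (cAnd C₁ C₂) (cAnd C₃ C₄)) (cAnd (star C₁ C₃) (star C₂ C₄)) :=
  le_cAnd (hstar (cAnd_le_left C₁ C₂) (cAnd_le_left C₃ C₄))
    (hstar (cAnd_le_right C₁ C₂) (cAnd_le_right C₃ C₄))

theorem CMonotone.cOr_le_map {star : B × B → B × B → B × B} (hstar : CMonotone star)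
    (C₁ C₂ C₃ C₄ : B × B) :
    cLe (cOr (star C₁ C₃) (star C₂ C₄)) (star (cOr C₁ C₂) (cOr C₃ C₄)) :=
  cOr_le (hstar (le_cOr_left C₁ C₂) (le_cOr_left C₃ C₄))
    (hstar (le_cOr_right C₁ C₂) (le_cOr_right C₃ C₄))

theorem semi_distributivity_general
    (star : B × B → B × B → B × B)
    (hstar : star = cAnd ∨ star = cOr ∨ star = cComp ∨ star = cMerge)
    (C₁ C₂ C₃ C₄ : B × B) :
    cLe (star (cAnd C₁ C₂) (cAnd C₃ C₄)) (cAnd (star C₁ C₃) (star C₂ C₄)) ∧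
    cLe (cOr (star C₁ C₃) (star C₂ C₄)) (star (cOr C₁ C₂) (cOr C₃ C₄)) := by
  have hmono : CMonotone star := by
    rcases hstar with rfl | rfl | rfl | rfl
    exacts [cMonotone_cAnd, cMonotone_cOr, cMonotone_cComp, cMonotone_cMerge]
  exact ⟨hmono.map_cAnd_le C₁ C₂ C₃ C₄, hmono.cOr_le_map C₁ C₂ C₃ C₄⟩

theorem semi_distributivity
    (star : B × B → B × B → B × B)
    (hstar : star = cAnd ∨ star = cOr ∨ star = cComp ∨ star = cMerge)
    (C₁ C₂ C₃ C₄ : B × B)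
    (h₁ : IsContract C₁) (h₂ : IsContract C₂) (h₃ : IsContract C₃) (h₄ : IsContract C₄) :
    cLe (star (cAnd C₁ C₂) (cAnd C₃ C₄)) (cAnd (star C₁ C₃) (star C₂ C₄)) ∧
    cLe (cOr (star C₁ C₃) (star C₂ C₄)) (star (cOr C₁ C₂) (cOr C₃ C₄)) :=
  semi_distributivity_general star hstar C₁ C₂ C₃ C₄
end

section
/- Let B and B' be Boolean algebras and let f be a map from contracts over B to contracts over B' that is a monoid morphism for composition, i.e., f(e_B) = e_{B'} and f(C ∥ C') = f(C) ∥ f(C') for all contracts C, C' over B. Then there exist maps l_a, l_g, r_a, r_g : B → B', each preserving ⊓ and sending ⊤ to ⊤, such that for every contract (a, g) over B, writing G = r_a(a ⊓ g) ⊓ r_g(g) and L = l_a(a ⊓ g) ⊓ l_g(g) ⊓ G, one has f(a, g) = (¬G ⊔ L, G). -/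
variable {B : Type*} [BooleanAlgebra B]

/-!
Every contract factors as `(a, g) = (a ⊓ g, ⊤) ∥ (⊤, g)`, and on each of the two families
`(x, ⊤)` and `(⊤, x)` composition is just `⊓` in the varying component. Moreover the guarantee
`C.2` and the saturated assumption `C.1 ⊓ C.2` turn composition into `⊓`, and a composite
`C ∥ C'` is determined by these two values. Restricting `f` to the two families and reading off
the two values gives the four `⊓`-morphisms.
-/

theorem isContract_mk_top (x : B) : IsContract (x, ⊤) := sup_top_eq x

theorem isContract_top_mk (x : B) : IsContract (⊤, x) := top_sup_eq x

theorem cComp_mk_top (x y : B) : cComp (x, ⊤) (y, ⊤) = (x ⊓ y, ⊤) := by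
  simp [cComp]

theorem cComp_top_mk (x y : B) : cComp (⊤, x) (⊤, y) = (⊤, x ⊓ y) := by
  simp [cComp]

theorem cComp_inf_top_top {a g : B} (hag : a ⊔ g = ⊤) : cComp (a ⊓ g, ⊤) (⊤, g) = (a, g) := by
  have hga : gᶜ ≤ a := codisjoint_iff_compl_le_left.mp (codisjoint_iff.mpr hag)
  simp only [cComp, inf_top_eq, top_inf_eq, Prod.mk.injEq, and_true]
  rw [sup_comm, sup_inf_left, sup_eq_right.mpr hga, compl_sup_eq_top, inf_top_eq]

theorem cComp_fst_inf_snd (C C' : B × B) :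
    (cComp C C').1 ⊓ (cComp C C').2 = C.1 ⊓ C.2 ⊓ (C'.1 ⊓ C'.2) := by
  simp only [cComp]
  rw [inf_sup_right, compl_inf_eq_bot, sup_bot_eq]
  ac_rfl

theorem cComp_eq (C C' : B × B) :
    cComp C C' = ((C.2 ⊓ C'.2)ᶜ ⊔ (C.1 ⊓ C.2 ⊓ (C'.1 ⊓ C'.2) ⊓ (C.2 ⊓ C'.2)), C.2 ⊓ C'.2) := by
  simp only [cComp, Prod.mk.injEq, and_true]
  rw [inf_inf_inf_comm C.1, inf_right_idem, sup_inf_left, compl_sup_eq_top, inf_top_eq, sup_comm]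

section Morphisms

variable {B' : Type*} [BooleanAlgebra B'] (φ : B → B' × B') (hφ_top : φ ⊤ = cE)
  (hφ_inf : ∀ x y, φ (x ⊓ y) = cComp (φ x) (φ y))

def guaranteeHom : InfTopHom B B' where
  toFun x := (φ x).2
  map_inf' x y := by rw [hφ_inf]; rfl
  map_top' := by rw [hφ_top]; rfl

def saturationHom : InfTopHom B B' where
  toFun x := (φ x).1 ⊓ (φ x).2
  map_inf' x y := by rw [hφ_inf, cComp_fst_inf_snd]
  map_top' := by simp [hφ_top, cE]

end Morphisms

theorem structure_of_composition_monoid_maps_general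
    {B' : Type*} [BooleanAlgebra B']
    (f : B × B → B' × B')
    (hone : f (cE (B := B)) = cE)
    (hmul : ∀ C C' : B × B, IsContract C → IsContract C' →
      f (cComp C C') = cComp (f C) (f C')) :
    ∃ la lg ra rg : B → B',
      (la ⊤ = ⊤ ∧ ∀ x y : B, la (x ⊓ y) = la x ⊓ la y) ∧
      (lg ⊤ = ⊤ ∧ ∀ x y : B, lg (x ⊓ y) = lg x ⊓ lg y) ∧
      (ra ⊤ = ⊤ ∧ ∀ x y : B, ra (x ⊓ y) = ra x ⊓ ra y) ∧
      (rg ⊤ = ⊤ ∧ ∀ x y : B, rg (x ⊓ y) = rg x ⊓ rg y) ∧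
      ∀ a g : B, a ⊔ g = ⊤ →
        f (a, g) = ((ra (a ⊓ g) ⊓ rg g)ᶜ ⊔ (la (a ⊓ g) ⊓ lg g ⊓ (ra (a ⊓ g) ⊓ rg g)),
                    ra (a ⊓ g) ⊓ rg g) := by
  have hA : ∀ x y : B, f (x ⊓ y, ⊤) = cComp (f (x, ⊤)) (f (y, ⊤)) := fun x y => by
    rw [← cComp_mk_top, hmul _ _ (isContract_mk_top x) (isContract_mk_top y)]
  have hG : ∀ x y : B, f (⊤, x ⊓ y) = cComp (f (⊤, x)) (f (⊤, y)) := fun x y => by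
    rw [← cComp_top_mk, hmul _ _ (isContract_top_mk x) (isContract_top_mk y)]
  refine ⟨saturationHom (fun x => f (x, ⊤)) hone hA, saturationHom (fun x => f (⊤, x)) hone hG,
    guaranteeHom (fun x => f (x, ⊤)) hone hA, guaranteeHom (fun x => f (⊤, x)) hone hG,
    ⟨map_top _, map_inf _⟩, ⟨map_top _, map_inf _⟩, ⟨map_top _, map_inf _⟩,
    ⟨map_top _, map_inf _⟩, fun a g hag => ?_⟩
  rw [← cComp_inf_top_top hag, hmul _ _ (isContract_mk_top _) (isContract_top_mk g)]
  exact cComp_eq _ _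

theorem structure_of_composition_monoid_maps
    {B' : Type*} [BooleanAlgebra B']
    (f : B × B → B' × B')
    (hcl : ∀ C : B × B, IsContract C → IsContract (f C))
    (hone : f (cE (B := B)) = cE)
    (hmul : ∀ C C' : B × B, IsContract C → IsContract C' →
      f (cComp C C') = cComp (f C) (f C')) :
    ∃ la lg ra rg : B → B',
      (la ⊤ = ⊤ ∧ ∀ x y : B, la (x ⊓ y) = la x ⊓ la y) ∧
      (lg ⊤ = ⊤ ∧ ∀ x y : B, lg (x ⊓ y) = lg x ⊓ lg y) ∧
      (ra ⊤ = ⊤ ∧ ∀ x y : B, ra (x ⊓ y) = ra x ⊓ ra y) ∧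
      (rg ⊤ = ⊤ ∧ ∀ x y : B, rg (x ⊓ y) = rg x ⊓ rg y) ∧
      ∀ a g : B, a ⊔ g = ⊤ →
        f (a, g) = ((ra (a ⊓ g) ⊓ rg g)ᶜ ⊔ (la (a ⊓ g) ⊓ lg g ⊓ (ra (a ⊓ g) ⊓ rg g)),
                    ra (a ⊓ g) ⊓ rg g) :=
  structure_of_composition_monoid_maps_general f hone hmul
end

section
/- Define the left action b · (a, g) = (b ⊓ a, ¬b ⊔ g) and right action (a, g) · b = (¬b ⊔ a, b ⊓ g) of an element b of a Boolean algebra B on contracts over B. Both actions map contracts to contracts and satisfy, for all b, b' ∈ B and contracts C, C': (order) b · C ≥ C, C · b ≤ C, and if C ≤ C' then b · C ≤ b · C' and C · b ≤ C' · b; (reciprocal) (b · C)⁻¹ = C⁻¹ · b; (associativity) (b ⊓ b') · C = b · (b' · C) and C · (b ⊓ b') = (C · b) · b'; (distributivity over B) (b ⊔ b') · C = (b · C) ∧ (b' · C) and C · (b ⊔ b') = (C · b) ∨ (C · b'); (contract operations) b · (C ∧ C') = (b · C) ∧ (b · C'), (C ∧ C') · b = (C · b) ∧ C', b · (C ∨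 C') = (b · C) ∨ C', (C ∨ C') · b = (C · b) ∨ (C' · b), b · (C ∥ C') = (b · C) ∥ (b · C'), (C ∥ C') · b = (C · b) ∥ C', b · (C • C') = (b · C) • C', and (C • C') · b = (C · b) • (C' · b); (quotient) b · (C / C') = C / (C' · b) = (b · C) / C' and (C / C') · b = (C · b) / (b · C'). -/
variable {B : Type*} [BooleanAlgebra B]

/-!
The identities for the left action are short Boolean-algebra computations. The reciprocal
exchanges the two components, so it swaps conjunction with disjunction, composition with merging,
and the two actions (`C · b = (b · C⁻¹)⁻¹`); as the quotient is `C • C'⁻¹`, each identity for the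
right action or the quotient is the reciprocal of one for the left action. These dualities hold
definitionally, so each transfer is a `congrArg cRecip`.
-/

theorem isContract_iff_compl_le (C : B × B) : IsContract C ↔ C.1ᶜ ≤ C.2 :=
  codisjoint_iff.symm.trans codisjoint_iff_compl_le_right

theorem IsContract.cRecip {C : B × B} (h : IsContract C) : IsContract (cRecip C) :=
  (sup_comm C.2 C.1).trans h

theorem isContract_lAct (b : B) {C : B × B} (h : IsContract C) : IsContract (lAct b C) :=
  (isContract_iff_compl_le _).2 <|
    (compl_inf ..).trans_le (sup_le_sup_left ((isContract_iff_compl_le C).1 h) _)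

theorem cLe_lAct (b : B) (C : B × B) : cLe C (lAct b C) :=
  ⟨le_sup_right, inf_le_right⟩

theorem lAct_mono (b : B) {C C' : B × B} (h : cLe C C') : cLe (lAct b C) (lAct b C') :=
  ⟨sup_le_sup_left h.1 _, inf_le_inf_left _ h.2⟩

theorem lAct_inf (b b' : B) (C : B × B) : lAct (b ⊓ b') C = lAct b (lAct b' C) :=
  Prod.ext (inf_assoc ..) (by rw [lAct, compl_inf, sup_assoc]; rfl)

theorem lAct_sup (b b' : B) (C : B × B) : lAct (b ⊔ b') C = cAnd (lAct b C) (lAct b' C) :=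
  Prod.ext (inf_sup_right ..) (by rw [lAct, compl_sup, sup_inf_right]; rfl)

theorem lAct_cAnd (b : B) (C C' : B × B) : lAct b (cAnd C C') = cAnd (lAct b C) (lAct b C') :=
  Prod.ext (inf_sup_left ..) (sup_inf_left ..)

theorem lAct_cOr (b : B) (C C' : B × B) : lAct b (cOr C C') = cOr (lAct b C) C' :=
  Prod.ext (inf_assoc ..).symm (sup_assoc ..).symm

theorem lAct_cComp (b : B) (C C' : B × B) :
    lAct b (cComp C C') = cComp (lAct b C) (lAct b C') := by
  obtain ⟨a, g⟩ := C
  obtain ⟨a', g'⟩ := C'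
  refine Prod.ext ?_ (sup_inf_left ..)
  show b ⊓ (a ⊓ a' ⊔ (g ⊓ g')ᶜ) = b ⊓ a ⊓ (b ⊓ a') ⊔ ((bᶜ ⊔ g) ⊓ (bᶜ ⊔ g'))ᶜ
  rw [← inf_inf_distrib_left, ← sup_inf_left, compl_sup, compl_compl, inf_sup_left]

theorem lAct_cMerge (b : B) (C C' : B × B) : lAct b (cMerge C C') = cMerge (lAct b C) C' := by
  obtain ⟨a, g⟩ := C
  obtain ⟨a', g'⟩ := C'
  refine Prod.ext (inf_assoc ..).symm ?_
  show bᶜ ⊔ (g ⊓ g' ⊔ (a ⊓ a')ᶜ) = (bᶜ ⊔ g) ⊓ g' ⊔ (b ⊓ a ⊓ a')ᶜ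
  have absorb : bᶜ ⊔ (bᶜ ⊔ g) ⊓ g' = bᶜ ⊔ g ⊓ g' := by
    rw [sup_inf_left, sup_left_idem, ← sup_inf_left]
  calc bᶜ ⊔ (g ⊓ g' ⊔ (a ⊓ a')ᶜ)
      = bᶜ ⊔ (bᶜ ⊔ g) ⊓ g' ⊔ (a ⊓ a')ᶜ := by rw [absorb, sup_assoc]
    _ = (bᶜ ⊔ g) ⊓ g' ⊔ (b ⊓ a ⊓ a')ᶜ := by
        rw [inf_assoc, compl_inf (x := b), ← sup_assoc, sup_comm bᶜ]

theorem isContract_rAct (b : B) {C : B × B} (h : IsContract C) : IsContract (rAct C b) :=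
  (isContract_lAct b h.cRecip).cRecip

theorem rAct_cLe (b : B) (C : B × B) : cLe (rAct C b) C :=
  (cLe_lAct b (cRecip C)).symm

theorem rAct_mono (b : B) {C C' : B × B} (h : cLe C C') : cLe (rAct C b) (rAct C' b) :=
  (lAct_mono b (C := cRecip C') (C' := cRecip C) h.symm).symm

theorem rAct_inf (b b' : B) (C : B × B) : rAct C (b ⊓ b') = rAct (rAct C b) b' := by
  rw [inf_comm]
  exact congrArg cRecip (lAct_inf b' b (cRecip C))

theorem rAct_sup (b b' : B) (C : B × B) : rAct C (b ⊔ b') = cOr (rAct C b) (rAct C b') :=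
  congrArg cRecip (lAct_sup b b' (cRecip C))

theorem rAct_cAnd (b : B) (C C' : B × B) : rAct (cAnd C C') b = cAnd (rAct C b) C' :=
  congrArg cRecip (lAct_cOr b (cRecip C) (cRecip C'))

theorem rAct_cOr (b : B) (C C' : B × B) : rAct (cOr C C') b = cOr (rAct C b) (rAct C' b) :=
  congrArg cRecip (lAct_cAnd b (cRecip C) (cRecip C'))

theorem rAct_cComp (b : B) (C C' : B × B) : rAct (cComp C C') b = cComp (rAct C b) C' :=
  congrArg cRecip (lAct_cMerge b (cRecip C) (cRecip C'))

theorem rAct_cMerge (b : B) (C C' : B × B) :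
    rAct (cMerge C C') b = cMerge (rAct C b) (rAct C' b) :=
  congrArg cRecip (lAct_cComp b (cRecip C) (cRecip C'))

theorem lAct_cQuot (b : B) (C C' : B × B) : lAct b (cQuot C C') = cQuot (lAct b C) C' :=
  lAct_cMerge b C (cRecip C')

theorem lAct_cQuot_eq_cQuot_rAct (b : B) (C C' : B × B) :
    lAct b (cQuot C C') = cQuot C (rAct C' b) := by
  show lAct b (cMerge C (cRecip C')) = cMerge C (cRecip (rAct C' b))
  rw [cMerge_comm, lAct_cMerge, cMerge_comm]
  rfl

theorem rAct_cQuot (b : B) (C C' : B × B) :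
    rAct (cQuot C C') b = cQuot (rAct C b) (lAct b C') :=
  rAct_cMerge b C (cRecip C')


theorem action_identities :
    (∀ (b : B) (C : B × B), IsContract C → IsContract (lAct b C)) ∧
    (∀ (b : B) (C : B × B), IsContract C → IsContract (rAct C b)) ∧
    -- order
    (∀ (b : B) (C : B × B), IsContract C → cLe C (lAct b C)) ∧
    (∀ (b : B) (C : B × B), IsContract C → cLe (rAct C b) C) ∧
    (∀ (b : B) (C C' : B × B), IsContract C → IsContract C' →
      cLe C C' → cLe (lAct b C) (lAct b C')) ∧
    (∀ (b : B) (C C' : B × B), IsContract C → IsContract C' →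
      cLe C C' → cLe (rAct C b) (rAct C' b)) ∧
    -- reciprocal
    (∀ (b : B) (C : B × B), IsContract C → cRecip (lAct b C) = rAct (cRecip C) b) ∧
    -- associativity
    (∀ (b b' : B) (C : B × B), IsContract C → lAct (b ⊓ b') C = lAct b (lAct b' C)) ∧
    (∀ (b b' : B) (C : B × B), IsContract C → rAct C (b ⊓ b') = rAct (rAct C b) b') ∧
    -- distributivity over the Boolean algebra
    (∀ (b b' : B) (C : B × B), IsContract C →
      lAct (b ⊔ b') C = cAnd (lAct b C) (lAct b' C)) ∧
    (∀ (b b' : B) (C : B × B), IsContract C →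
      rAct C (b ⊔ b') = cOr (rAct C b) (rAct C b')) ∧
    -- actions and the contract operations
    (∀ (b : B) (C C' : B × B), IsContract C → IsContract C' →
      lAct b (cAnd C C') = cAnd (lAct b C) (lAct b C')) ∧
    (∀ (b : B) (C C' : B × B), IsContract C → IsContract C' →
      rAct (cAnd C C') b = cAnd (rAct C b) C') ∧
    (∀ (b : B) (C C' : B × B), IsContract C → IsContract C' →
      lAct b (cOr C C') = cOr (lAct b C) C') ∧
    (∀ (b : B) (C C' : B × B), IsContract C → IsContract C' →
      rAct (cOr C C') b = cOr (rAct C b) (rAct C' b)) ∧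
    (∀ (b : B) (C C' : B × B), IsContract C → IsContract C' →
      lAct b (cComp C C') = cComp (lAct b C) (lAct b C')) ∧
    (∀ (b : B) (C C' : B × B), IsContract C → IsContract C' →
      rAct (cComp C C') b = cComp (rAct C b) C') ∧
    (∀ (b : B) (C C' : B × B), IsContract C → IsContract C' →
      lAct b (cMerge C C') = cMerge (lAct b C) C') ∧
    (∀ (b : B) (C C' : B × B), IsContract C → IsContract C' →
      rAct (cMerge C C') b = cMerge (rAct C b) (rAct C' b)) ∧
    -- actions and the quotient
    (∀ (b : B) (C C' : B × B), IsContract C → IsContract C' →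
      lAct b (cQuot C C') = cQuot C (rAct C' b) ∧
      lAct b (cQuot C C') = cQuot (lAct b C) C') ∧
    (∀ (b : B) (C C' : B × B), IsContract C → IsContract C' →
      rAct (cQuot C C') b = cQuot (rAct C b) (lAct b C')) :=
  ⟨fun b _ => isContract_lAct b, fun b _ => isContract_rAct b,
    fun b C _ => cLe_lAct b C, fun b C _ => rAct_cLe b C,
    fun b _ _ _ _ => lAct_mono b, fun b _ _ _ _ => rAct_mono b,
    fun _ _ _ => rfl,
    fun b b' C _ => lAct_inf b b' C, fun b b' C _ => rAct_inf b b' C,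
    fun b b' C _ => lAct_sup b b' C, fun b b' C _ => rAct_sup b b' C,
    fun b C C' _ _ => lAct_cAnd b C C', fun b C C' _ _ => rAct_cAnd b C C',
    fun b C C' _ _ => lAct_cOr b C C', fun b C C' _ _ => rAct_cOr b C C',
    fun b C C' _ _ => lAct_cComp b C C', fun b C C' _ _ => rAct_cComp b C C',
    fun b C C' _ _ => lAct_cMerge b C C', fun b C C' _ _ => rAct_cMerge b C C',
    fun b C C' _ _ => ⟨lAct_cQuot_eq_cQuot_rAct b C C', lAct_cQuot b C C'⟩,
    fun b C C' _ _ => rAct_cQuot b C C'⟩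
end
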